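/- arXiv:1502.03005 — 3 statements merged into one kernel-verified Lean document; each statement's English description precedes it below -/
import Mathlib

section
/- Let (A, (G_I, G_T)) be a contract and suppose s₀ is a state with G_I(s₀) and Viable(s₀). Then the transition system (I, T) defined by I(s) := (s = s₀) and T(s, i, s') := G_T(s, i, s') ∧ Viable(s') is a realization of the contract (A, (G_I, G_T)). (Construction for the 'if' direction of Theorem 1) -/
/-- Reachability with respect to assumptions: least predicate closed under
    initial states and assumption-respecting transitions. -/
inductive Reachable {state input : Type*} (I : state → Prop)
    (T : state → input → state → Prop) (A : state → input → Prop) : state → Prop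
  | init (s : state) : I s → Reachable I T A s
  | step (s_prev : state) (i : input) (s : state) :
      Reachable I T A s_prev → A s_prev i → T s_prev i s → Reachable I T A s

/-- A transition system (I, T) is a realization of the contract (A, (GI, GT)). -/
def Realization {state input : Type*} (I : state → Prop)
    (T : state → input → state → Prop) (A : state → input → Prop)
    (GI : state → Prop) (GT : state → input → state → Prop) : Prop :=
  (∀ s, I s → GI s) ∧
  (∀ s i s', Reachable I T A s ∧ A s i ∧ T s i s' → GT s i s') ∧
  (∃ s, I s) ∧
  (∀ s i, Reachable I T A s ∧ A s i → ∃ s', T s i s')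

/-- A contract is realizable if some transition system realizes it. -/
def Realizable {state input : Type*} (A : state → input → Prop)
    (GI : state → Prop) (GT : state → input → state → Prop) : Prop :=
  ∃ I T, Realization I T A GI GT

/-- Viability: the greatest predicate V with
    V s ↔ ∀ i, A s i → ∃ s', GT s i s' ∧ V s'.
    Characterized via Knaster–Tarski as the union of all post-fixed points. -/
def Viable {state input : Type*} (A : state → input → Prop)
    (GT : state → input → state → Prop) (s : state) : Prop :=
  ∃ V : state → Prop, V s ∧ (∀ x, V x → ∀ i, A x i → ∃ s', GT x i s' ∧ V s')

/-- Finite viability: GT can keep responding to valid inputs for n steps. -/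
def ViableN {state input : Type*} (A : state → input → Prop)
    (GT : state → input → state → Prop) : ℕ → state → Prop
  | 0, _ => True
  | n + 1, s => ∀ i, A s i → ∃ s', GT s i s' ∧ ViableN A GT n s'

/-- One-step extendability after n steps. -/
def ExtendN {state input : Type*} (A : state → input → Prop)
    (GT : state → input → state → Prop) : ℕ → state → Prop
  | 0, s => ∀ i, A s i → ∃ s', GT s i s'
  | n + 1, s => ∀ i s₁, A s i ∧ GT s i s₁ → ExtendN A GT n s₁

/-- BaseCheck(n): some initial-guarantee state is viable for n steps. -/
def BaseCheck {state input : Type*} (A : state → input → Prop)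
    (GI : state → Prop) (GT : state → input → state → Prop) (n : ℕ) : Prop :=
  ∃ s, GI s ∧ ViableN A GT n s

/-- ExtendCheck(n): every state is extendable after n steps. -/
def ExtendCheck {state input : Type*} (A : state → input → Prop)
    (GT : state → input → state → Prop) (n : ℕ) : Prop :=
  ∀ s, ExtendN A GT n s

/-- Simplified base check BaseCheck'(n). -/
def BaseCheck' {state input : Type*} (A : state → input → Prop)
    (GI : state → Prop) (GT : state → input → state → Prop) (n : ℕ) : Prop :=
  ∀ s, GI s → ExtendN A GT n s

/-! Viable states form a post-fixed point of the step operator, so restricting `GT` to viable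
targets never gets stuck on an allowed input. Every reachable state is viable: the initial one
is by hypothesis, and each transition of the constructed system lands in a viable state. -/

section

variable {state input : Type*} {A : state → input → Prop} {GT : state → input → state → Prop}

theorem Viable.exists_step {s : state} (hs : Viable A GT s) {i : input} (hA : A s i) :
    ∃ s', GT s i s' ∧ Viable A GT s' := by
  obtain ⟨V, hVs, hV⟩ := hs
  obtain ⟨s', hGT, hVs'⟩ := hV s hVs i hA
  exact ⟨s', hGT, V, hVs', hV⟩

theorem Reachable.of_invariant {I : state → Prop} {T : state → input → state → Prop}
    {P : state → Prop} (hI : ∀ s, I s → P s)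
    (hT : ∀ s i s', P s → A s i → T s i s' → P s') {s : state}
    (hs : Reachable I T A s) : P s := by
  induction hs with
  | init s hs => exact hI s hs
  | step s_prev i s _ hA hstep ih => exact hT s_prev i s ih hA hstep

theorem Reachable.viable_of_viable_target {I : state → Prop} {s : state}
    (hs : Reachable I (fun s i s' => GT s i s' ∧ Viable A GT s') A s)
    (hI : ∀ s, I s → Viable A GT s) : Viable A GT s :=
  hs.of_invariant hI fun _ _ _ _ _ hstep => hstep.2

end

/-- Construction for the 'if' direction of Theorem 1: if GI s₀ and Viable s₀,
    then (I, T) with I s := (s = s₀) and T s i s' := GT s i s' ∧ Viable s'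
    is a realization of the contract. -/
theorem realization_construction {state input : Type*}
    (A : state → input → Prop) (GI : state → Prop)
    (GT : state → input → state → Prop) (s₀ : state)
    (hGI : GI s₀) (hV : Viable A GT s₀) :
    Realization (fun s => s = s₀) (fun s i s' => GT s i s' ∧ Viable A GT s')
      A GI GT := by
  refine ⟨fun s hs => hs ▸ hGI, fun _ _ _ h => h.2.2.1, ⟨s₀, rfl⟩, ?_⟩
  rintro s i ⟨hreach, hA⟩
  have hviable : Viable A GT s := hreach.viable_of_viable_target fun _ hs => hs ▸ hV
  exact hviable.exists_step hA
end

section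
/- Soundness of the 'realizable' result: for a contract (A, (G_I, G_T)), if there exists n such that both BaseCheck(n) and ExtendCheck(n) hold, then the contract is realizable. -/
/-!
Under `ExtendCheck n`, every state viable for `n` steps can answer any admissible input with
a guaranteed step to a state that is again viable for `n` steps, so `ViableN A GT n` is a
post-fixed point of the viability operator. `BaseCheck n` supplies an initial state in it, and
restricting `GI` and `GT` to a viable set yields a realization: every reachable state is viable,
hence has a successor.
-/

section

variable {state input : Type*} {A : state → input → Prop} {GT : state → input → state → Prop}

theorem Reachable.of_init_of_target {I : state → Prop} {T : state → input → state → Prop}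
    {P : state → Prop} (hI : ∀ s, I s → P s) (hT : ∀ s i s', T s i s' → P s') {s : state}
    (h : Reachable I T A s) : P s := by
  cases h with
  | init _ hs => exact hI s hs
  | step s_prev i _ _ _ hs => exact hT s_prev i s hs

theorem ViableN.succ_of_extendN :
    ∀ {n : ℕ} {s : state}, ExtendN A GT n s → ViableN A GT n s → ViableN A GT (n + 1) s
  | 0, _, hext, _ => fun i hA => (hext i hA).imp fun _ hGT => ⟨hGT, trivial⟩
  | _ + 1, _, hext, hviable => fun i hA =>
    (hviable i hA).imp fun s' ⟨hGT, hs'⟩ => ⟨hGT, succ_of_extendN (hext i s' ⟨hA, hGT⟩) hs'⟩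

theorem ViableN.viable_of_extendCheck {n : ℕ} (hext : ExtendCheck A GT n) {s : state}
    (hs : ViableN A GT n s) : Viable A GT s :=
  ⟨ViableN A GT n, hs, fun _ hx => succ_of_extendN (hext _) hx⟩

theorem realizable_of_viable {GI : state → Prop} {s₀ : state} (hGI : GI s₀)
    (hs₀ : Viable A GT s₀) : Realizable A GI GT := by
  obtain ⟨V, hV₀, hV⟩ := hs₀
  have reachable_viable : ∀ {s}, Reachable (fun s => GI s ∧ V s)
      (fun s i s' => GT s i s' ∧ V s') A s → V s :=
    Reachable.of_init_of_target (fun _ hs => hs.2) (fun _ _ _ hT => hT.2)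
  refine ⟨fun s => GI s ∧ V s, fun s i s' => GT s i s' ∧ V s', fun _ hs => hs.1,
    fun _ _ _ hT => hT.2.2.1, ⟨s₀, hGI, hV₀⟩, ?_⟩
  rintro s i ⟨hreach, hA⟩
  exact hV s (reachable_viable hreach) i hA

end

/-- Soundness of the 'realizable' result: if BaseCheck(n) and ExtendCheck(n)
    both hold for some n, then the contract is realizable. -/
theorem realizable_sound {state input : Type*}
    (A : state → input → Prop) (GI : state → Prop)
    (GT : state → input → state → Prop)
    (h : ∃ n, BaseCheck A GI GT n ∧ ExtendCheck A GT n) :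
    Realizable A GI GT := by
  obtain ⟨n, ⟨s₀, hGI, hs₀⟩, hext⟩ := h
  exact realizable_of_viable hGI (hs₀.viable_of_extendCheck hext)
end

section
/- Incompleteness example (unrealizable side), part 1: take state = ℤ and input any inhabited type, and consider the contract with A(s, i) := True, G_I(s) := (s ≥ 0), and G_T(s, i, s') := (s' = s - 1 ∧ s' ≥ 0). This contract is not realizable. -/
/-! Along any realization the reachable states form a post-fixed point of the viability
operator, so some initial state is viable. But from a viable state the countdown guarantee
`s' = s - 1 ∧ s' ≥ 0` can be iterated forever, which drives the state below zero. -/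

theorem Realization.viable_of_reachable {state input : Type*} {I : state → Prop}
    {T : state → input → state → Prop} {A : state → input → Prop} {GI : state → Prop}
    {GT : state → input → state → Prop} (h : Realization I T A GI GT) {s : state}
    (hs : Reachable I T A s) : Viable A GT s := by
  obtain ⟨-, hGT, -, hT⟩ := h
  refine ⟨Reachable I T A, hs, fun x hx i hA => ?_⟩
  obtain ⟨x', hx'⟩ := hT x i ⟨hx, hA⟩
  exact ⟨x', hGT x i x' ⟨hx, hA, hx'⟩, .step x i x' hx hA hx'⟩

theorem Realizable.exists_viable {state input : Type*} {A : state → input → Prop}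
    {GI : state → Prop} {GT : state → input → state → Prop} (h : Realizable A GI GT) :
    ∃ s, GI s ∧ Viable A GT s := by
  obtain ⟨I, T, hR⟩ := h
  obtain ⟨s, hs⟩ := hR.2.2.1
  exact ⟨s, hR.1 s hs, hR.viable_of_reachable (.init s hs)⟩

theorem not_viable_countdown {input : Type*} [Nonempty input] (s : ℤ) :
    ¬ Viable (fun (_ : ℤ) (_ : input) => True)
      (fun (s : ℤ) (_ : input) (s' : ℤ) => s' = s - 1 ∧ s' ≥ 0) s := by
  rintro ⟨V, hs, hV⟩
  have hpred : ∀ x, V x → x - 1 ≥ 0 ∧ V (x - 1) := fun x hx => by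
    obtain ⟨x', ⟨rfl, hx'⟩, hVx'⟩ := hV x hx (Classical.arbitrary input) trivial
    exact ⟨hx', hVx'⟩
  have hcount : ∀ n : ℕ, V (s - n) := by
    intro n
    induction n with
    | zero => simpa using hs
    | succ n ih => simpa [sub_sub] using (hpred _ ih).2
  have := (hpred _ (hcount s.toNat)).1
  omega

/-- Incompleteness example (unrealizable side), part 1: the contract with
    A := True, GI s := (s ≥ 0), GT s i s' := (s' = s - 1 ∧ s' ≥ 0) over
    integer states is not realizable. -/
theorem example_unrealizable {input : Type*} [Inhabited input] :
    ¬ Realizable (fun (_ : ℤ) (_ : input) => True) (fun (s : ℤ) => s ≥ 0)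
      (fun (s : ℤ) (_ : input) (s' : ℤ) => s' = s - 1 ∧ s' ≥ 0) := fun h =>
  let ⟨s, _, hs⟩ := h.exists_viable
  not_viable_countdown s hs
end
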